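/- (Lemma 4.3(i).) Let (u*, p*) be a saddle point of L on U × C* with ‖p*‖ ≤ μ. Let u^k ∈ U, p^k ∈ C* with ‖p^k‖ ≤ μ, q^k = Π(p^k + γΘ(u^k)), and suppose 0 < ε^{k+1} ≤ ε^k < Nβ/(N B_G + γτ²). For each i let u^{k+1,i} be the SPDC block update with block i and step ε^k and p^{k+1,i} = 𝒫_μ(Π(p^k + γΘ(u^{k+1,i}))). With Λ^ε(u,p) = D(u*,u) + (ε/(2γN))‖p* − p‖² + ε(L(u,p*) − L(u*,p*)), one has (ε^k/N)[L_γ(u^k, p^k) − L_γ(u*, p^k)] ≤ [Λ^{ε^k}(u^k, p^k) − (1/N)∑_{i=1}^N Λ^{ε^{k+1}}(u^{k+1,i}, p^{k+1,i})] − (1/(2γN))[ε^k‖p* − p^k‖² − ε^{k+1}·(1/N)∑_{i=1}^N ‖p* − p^{k+1,i}‖²] + ε^k τ ‖q^k − p*‖ · (1/N)∑_{i=1}^N ‖u^k − u^{k+1,i}‖. -/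

import Mathlib

open RealInnerProductSpace

/-- The ambient product space `ℝ^n = ℝ^{n_1} × … × ℝ^{n_N}` with the Euclidean
(ℓ²) product structure. -/
abbrev BlockSpace {N : ℕ} (nd : Fin N → ℕ) :=
  PiLp 2 (fun i : Fin N => EuclideanSpace ℝ (Fin (nd i)))


lemma dirDeriv {E : Type*} [NormedAddCommGroup E] [InnerProductSpace ℝ E] [CompleteSpace E]
    {f : E → ℝ} {f' : E} (x w : E) (t₀ : ℝ) (hf : HasGradientAt f f' (x + t₀ • w)) :
    HasDerivAt (fun t : ℝ => f (x + t • w)) ⟪f', w⟫ t₀ := by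
  have hline : HasDerivAt (fun t : ℝ => x + t • w) w t₀ := by
    simpa using ((hasDerivAt_id t₀).smul_const w).const_add x
  have := (hf.hasFDerivAt.comp_hasDerivAt t₀ hline)
  simp only [Function.comp_def, InnerProductSpace.toDual_apply_apply] at this
  exact this

lemma slope_limit_lower {E : Type*} [NormedAddCommGroup E] [InnerProductSpace ℝ E] [CompleteSpace E]
    {f : E → ℝ} {f' : E} (v w : E) (hf : HasGradientAt f f' v) (c : ℝ)
    (h : ∀ t ∈ Set.Ioc (0:ℝ) 1, t * c ≤ f (v + t • w) - f v) : c ≤ ⟪f', w⟫ := by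
  have hf' : HasGradientAt f f' (v + (0:ℝ) • w) := by simpa using hf
  have hd : HasDerivAt (fun t : ℝ => f (v + t • w)) ⟪f', w⟫ 0 := dirDeriv v w 0 hf'
  have htend : Filter.Tendsto (fun t : ℝ => (f (v + t • w) - f v) / t)
      (nhdsWithin 0 (Set.Ioi 0)) (nhds ⟪f', w⟫) := by
    have := hd.tendsto_slope_zero_right
    simpa [slope_def_field, div_eq_inv_mul] using this
  refine ge_of_tendsto htend ?_
  filter_upwards [Ioc_mem_nhdsGT_of_mem (Set.mem_Ico.2 ⟨le_refl 0, one_pos⟩)] with t ht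
  rw [le_div_iff₀ ht.1]
  linarith [h t ht]

lemma slope_limit_upper {E : Type*} [NormedAddCommGroup E] [InnerProductSpace ℝ E] [CompleteSpace E]
    {f : E → ℝ} {f' : E} (v w : E) (hf : HasGradientAt f f' v) (c : ℝ)
    (h : ∀ t ∈ Set.Ioc (0:ℝ) 1, f (v + t • w) - f v ≤ t * c) : ⟪f', w⟫ ≤ c := by
  have hf' : HasGradientAt f f' (v + (0:ℝ) • w) := by simpa using hf
  have hd : HasDerivAt (fun t : ℝ => f (v + t • w)) ⟪f', w⟫ 0 := dirDeriv v w 0 hf'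
  have htend : Filter.Tendsto (fun t : ℝ => (f (v + t • w) - f v) / t)
      (nhdsWithin 0 (Set.Ioi 0)) (nhds ⟪f', w⟫) := by
    have := hd.tendsto_slope_zero_right
    simpa [slope_def_field, div_eq_inv_mul] using this
  refine le_of_tendsto htend ?_
  filter_upwards [Ioc_mem_nhdsGT_of_mem (Set.mem_Ico.2 ⟨le_refl 0, one_pos⟩)] with t ht
  rw [div_le_iff₀ ht.1]
  linarith [h t ht]

lemma grad_convex_ineq {E : Type*} [NormedAddCommGroup E] [InnerProductSpace ℝ E] [CompleteSpace E]
    {f : E → ℝ} {f' : E} (x y : E) (hf : HasGradientAt f f' x)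
    (hconv : ConvexOn ℝ Set.univ f) : f x + ⟪f', y - x⟫ ≤ f y := by
  have h := slope_limit_upper x (y - x) hf (f y - f x) ?_
  · linarith
  · intro t ht
    have hc := hconv.2 (Set.mem_univ y) (Set.mem_univ x) (le_of_lt ht.1)
      (by linarith [ht.2] : (0:ℝ) ≤ 1 - t) (by ring)
    have hxe : t • y + (1 - t) • x = x + t • (y - x) := by module
    rw [hxe] at hc
    simp only [smul_eq_mul] at hc
    nlinarith [hc]

lemma descent_lemma {E : Type*} [NormedAddCommGroup E] [InnerProductSpace ℝ E] [CompleteSpace E]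
    {f : E → ℝ} {f' : E → E} (hf : ∀ x, HasGradientAt f (f' x) x)
    (B : ℝ) (hB : ∀ x y, ‖f' x - f' y‖ ≤ B * ‖x - y‖) (x y : E) :
    f y ≤ f x + ⟪f' x, y - x⟫ + B / 2 * ‖y - x‖ ^ 2 := by
  set w := y - x with hw
  set φ : ℝ → ℝ := fun t => f (x + t • w) - t * ⟪f' x, w⟫ - t ^ 2 * (B * ‖w‖ ^ 2) / 2 with hφ
  have hder : ∀ t : ℝ, HasDerivAt φ (⟪f' (x + t • w), w⟫ - ⟪f' x, w⟫ - t * (B * ‖w‖ ^ 2)) t := by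
    intro t
    have h1 : HasDerivAt (fun t : ℝ => f (x + t • w)) ⟪f' (x + t • w), w⟫ t :=
      dirDeriv x w t (hf _)
    have h2 : HasDerivAt (fun t : ℝ => t * ⟪f' x, w⟫) ⟪f' x, w⟫ t := by
      simpa using (hasDerivAt_id t).mul_const ⟪f' x, w⟫
    have h3 : HasDerivAt (fun t : ℝ => t ^ 2 * (B * ‖w‖ ^ 2) / 2) (t * (B * ‖w‖ ^ 2)) t := by
      have := ((hasDerivAt_pow 2 t).mul_const (B * ‖w‖ ^ 2)).div_const 2
      rw [show t * (B * ‖w‖ ^ 2) = ((2:ℕ):ℝ) * t ^ (2 - 1) * (B * ‖w‖ ^ 2) / 2 by norm_num <;> ring]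
      exact this
    have h4 := (h1.sub h2).sub h3
    exact h4
  have hanti : AntitoneOn φ (Set.Icc 0 1) := by
    refine antitoneOn_of_deriv_nonpos (convex_Icc 0 1) ?_ ?_ ?_
    · exact Continuous.continuousOn (by
        have : Continuous φ := by
          have : Differentiable ℝ φ := fun t => (hder t).differentiableAt
          exact this.continuous
        exact this)
    · intro t _
      exact (hder t).differentiableAt.differentiableWithinAt
    · intro t ht
      rw [interior_Icc] at ht
      rw [(hder t).deriv]
      have hcs : ⟪f' (x + t • w) - f' x, w⟫ ≤ ‖f' (x + t • w) - f' x‖ * ‖w‖ :=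
        real_inner_le_norm _ _
      have hlip : ‖f' (x + t • w) - f' x‖ ≤ B * (t * ‖w‖) := by
        have := hB (x + t • w) x
        simpa [norm_smul, abs_of_pos ht.1] using this
      have hw0 : (0:ℝ) ≤ ‖w‖ := norm_nonneg _
      have : ⟪f' (x + t • w) - f' x, w⟫ ≤ B * (t * ‖w‖) * ‖w‖ :=
        le_trans hcs (mul_le_mul_of_nonneg_right hlip hw0)
      have hexp : ⟪f' (x + t • w) - f' x, w⟫ = ⟪f' (x + t • w), w⟫ - ⟪f' x, w⟫ :=
        inner_sub_left _ _ _
      nlinarith [this]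
  have h01 := hanti (Set.mem_Icc.2 ⟨le_refl 0, zero_le_one⟩) (Set.mem_Icc.2 ⟨zero_le_one, le_refl 1⟩) zero_le_one
  simp only [hφ] at h01
  norm_num at h01
  have hxy : x + w = y := by rw [hw]; abel
  rw [hxy] at h01
  nlinarith [h01]

set_option maxHeartbeats 1000000 in
/-- Lemma 4.3(i). -/
theorem spdc_augmented_primal_descent {m N : ℕ} (nd : Fin N → ℕ)
    (Ui : ∀ i : Fin N, Set (EuclideanSpace ℝ (Fin (nd i))))
    (hUi_ne : ∀ i, (Ui i).Nonempty) (hUi_closed : ∀ i, IsClosed (Ui i))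
    (hUi_convex : ∀ i, Convex ℝ (Ui i))
    (U : Set (BlockSpace nd)) (hU_def : U = {u : BlockSpace nd | ∀ i, u i ∈ Ui i})
    (C : Set (EuclideanSpace ℝ (Fin m)))
    (hC_ne : C.Nonempty) (hC_closed : IsClosed C) (hC_convex : Convex ℝ C)
    (hC_cone : ∀ a b : ℝ, 0 ≤ a → 0 ≤ b → ∀ x ∈ C, ∀ y ∈ C, a • x + b • y ∈ C)
    (Cstar : Set (EuclideanSpace ℝ (Fin m)))
    (hCstar : Cstar = {p : EuclideanSpace ℝ (Fin m) | ∀ x ∈ C, 0 ≤ ⟪p, x⟫})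
    (proj : EuclideanSpace ℝ (Fin m) → EuclideanSpace ℝ (Fin m))
    (hproj_mem : ∀ x, proj x ∈ Cstar)
    (hproj_char : ∀ x, ∀ q ∈ Cstar, ⟪q - proj x, x - proj x⟫ ≤ 0)
    (G : BlockSpace nd → ℝ) (G' : BlockSpace nd → BlockSpace nd)
    (hG_grad : ∀ x, HasGradientAt G (G' x) x)
    (hG_convex : ConvexOn ℝ Set.univ G)
    (BG : ℝ) (hBG : ∀ x y, ‖G' x - G' y‖ ≤ BG * ‖x - y‖)
    (Ji : ∀ i : Fin N, EuclideanSpace ℝ (Fin (nd i)) → ℝ)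
    (J : BlockSpace nd → ℝ) (hJ_add : ∀ u, J u = ∑ i, Ji i (u i))
    (hJ_convex : ConvexOn ℝ Set.univ J) (hJ_lsc : LowerSemicontinuous J)
    (Θi : ∀ i : Fin N, EuclideanSpace ℝ (Fin (nd i)) → EuclideanSpace ℝ (Fin m))
    (Θ : BlockSpace nd → EuclideanSpace ℝ (Fin m))
    (hΘ_add : ∀ u, Θ u = ∑ i, Θi i (u i))
    (hΘ_Cconvex : ∀ u v : BlockSpace nd, ∀ α : ℝ, α ∈ Set.Icc (0:ℝ) 1 →
      -(Θ (α • u + (1 - α) • v) - α • Θ u - (1 - α) • Θ v) ∈ C)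
    (τ : ℝ) (O : Set (BlockSpace nd)) (hO : IsOpen O) (hUO : U ⊆ O)
    (hΘ_lip : ∀ u ∈ O, ∀ v ∈ O, ‖Θ u - Θ v‖ ≤ τ * ‖u - v‖)
    (γ : ℝ) (hγ : 0 < γ)
    (K : BlockSpace nd → ℝ) (K' : BlockSpace nd → BlockSpace nd)
    (hK_grad : ∀ x, HasGradientAt K (K' x) x)
    (Ki : ∀ i : Fin N, EuclideanSpace ℝ (Fin (nd i)) → ℝ)
    (hK_add : ∀ u, K u = ∑ i, Ki i (u i))
    (β : ℝ) (hβ : 0 < β)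
    (hK_strong : ∀ x y : BlockSpace nd,
      K x + ⟪K' x, y - x⟫ + β / 2 * ‖y - x‖ ^ 2 ≤ K y)
    (D : BlockSpace nd → BlockSpace nd → ℝ)
    (hD : ∀ u v, D u v = K u - K v - ⟪K' v, u - v⟫)
    (L : BlockSpace nd → EuclideanSpace ℝ (Fin m) → ℝ)
    (hL : ∀ u p, L u p = G u + J u + ⟪p, Θ u⟫)
    (Lγ : BlockSpace nd → EuclideanSpace ℝ (Fin m) → ℝ)
    (hLγ : ∀ u p, Lγ u p =
      G u + J u + (‖proj (p + γ • Θ u)‖ ^ 2 - ‖p‖ ^ 2) / (2 * γ))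
    (ustar : BlockSpace nd) (pstar : EuclideanSpace ℝ (Fin m))
    (hustar : ustar ∈ U) (hpstar : pstar ∈ Cstar)
    (hsaddle : (∀ p ∈ Cstar, L ustar p ≤ L ustar pstar) ∧
      (∀ u ∈ U, L ustar pstar ≤ L u pstar))
    (μ : ℝ) (hμpstar : ‖pstar‖ ≤ μ)
    (uk : BlockSpace nd) (huk : uk ∈ U)
    (pk : EuclideanSpace ℝ (Fin m)) (hpk : pk ∈ Cstar) (hpkμ : ‖pk‖ ≤ μ)
    (qk : EuclideanSpace ℝ (Fin m)) (hqk : qk = proj (pk + γ • Θ uk))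
    (εk εk1 : ℝ) (hεk1 : 0 < εk1) (hεk1k : εk1 ≤ εk)
    (hεkbar : εk < N * β / (N * BG + γ * τ ^ 2))
    (u1 : Fin N → BlockSpace nd) (hu1_mem : ∀ i, u1 i ∈ U)
    (hu1_fix : ∀ i j, j ≠ i → u1 i j = uk j)
    (hu1_min : ∀ i, ∀ u ∈ U,
      ⟪G' uk i, u1 i i⟫ + Ji i (u1 i i) + ⟪qk, Θi i (u1 i i)⟫ + D (u1 i) uk / εk ≤
        ⟪G' uk i, u i⟫ + Ji i (u i) + ⟪qk, Θi i (u i)⟫ + D u uk / εk)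
    (p1 : Fin N → EuclideanSpace ℝ (Fin m))
    (hp1 : ∀ i, p1 i =
      min 1 (μ / ‖proj (pk + γ • Θ (u1 i))‖) • proj (pk + γ • Θ (u1 i)))
    (Λ : ℝ → BlockSpace nd → EuclideanSpace ℝ (Fin m) → ℝ)
    (hΛ : ∀ ε u p, Λ ε u p =
      D ustar u + ε / (2 * γ * N) * ‖pstar - p‖ ^ 2
        + ε * (L u pstar - L ustar pstar))
     :
    εk / N * (Lγ uk pk - Lγ ustar pk) ≤
      (Λ εk uk pk - 1 / N * ∑ i, Λ εk1 (u1 i) (p1 i))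
        - 1 / (2 * γ * N) *
            (εk * ‖pstar - pk‖ ^ 2 - εk1 * (1 / N * ∑ i, ‖pstar - p1 i‖ ^ 2))
        + εk * τ * ‖qk - pstar‖ * (1 / N * ∑ i, ‖uk - u1 i‖) := by
  
  -- basic positivity facts
  classical
  rcases Nat.eq_zero_or_pos N with hN0 | hNpos
  · -- trivial case N = 0
    subst hN0
    have huu : uk = ustar := (WithLp.ext_iff 2).2 (funext fun j => j.elim0)
    have hD0 : D ustar ustar = 0 := by rw [hD]; simp
    simp only [Nat.cast_zero, div_zero, zero_mul, Finset.univ_eq_empty, Finset.sum_empty,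
      mul_zero, hΛ, huu, hD0, sub_self]
    norm_num
  have hNpos' : (0:ℝ) < N := by exact_mod_cast hNpos
  have hεk : (0:ℝ) < εk := lt_of_lt_of_le hεk1 hεk1k
  -- projection facts
  have hCs_mem : ∀ p, p ∈ Cstar ↔ ∀ x ∈ C, 0 ≤ ⟪p, x⟫ := by
    intro p; rw [hCstar]; exact Iff.rfl
  have h0Cstar : (0 : EuclideanSpace ℝ (Fin m)) ∈ Cstar := by
    rw [hCs_mem]; intro x _; simp
  have hprojCs : ∀ x, ∀ z ∈ C, 0 ≤ ⟪proj x, z⟫ := by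
    intro x; exact (hCs_mem (proj x)).1 (hproj_mem x)
  have h2mem : ∀ x, (2:ℝ) • proj x ∈ Cstar := by
    intro x; rw [hCs_mem]; intro z hz; rw [real_inner_smul_left]
    nlinarith [hprojCs x z hz]
  have hpis : ∀ x, ⟪proj x, x⟫ = ‖proj x‖^2 := by
    intro x
    have h1 := hproj_char x 0 h0Cstar
    have h2 := hproj_char x ((2:ℝ) • proj x) (h2mem x)
    simp only [inner_sub_left, inner_sub_right, inner_smul_left, inner_zero_left,
      real_inner_self_eq_norm_sq, RCLike.ofReal_real_eq_id, id_eq, conj_trivial] at h1 h2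
    linarith
  have key1 : ∀ x y, ‖proj x‖^2 + 2*⟪proj x, y - x⟫ ≤ ‖proj y‖^2 := by
    intro x y
    have ha := hproj_char y (proj x) (hproj_mem x)
    have hb := hpis y
    have hc := hpis x
    have hcs : ⟪proj x, proj y⟫ ≤ ‖proj x‖ * ‖proj y‖ := real_inner_le_norm _ _
    have hsq : ‖proj x‖ * ‖proj y‖ ≤ (‖proj x‖^2 + ‖proj y‖^2)/2 := by
      nlinarith [sq_nonneg (‖proj x‖ - ‖proj y‖)]
    simp only [inner_sub_left, inner_sub_right, real_inner_self_eq_norm_sq] at ha ⊢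
    linarith
  -- Step A : augmented Lagrangian primal difference bound
  have stepA : Lγ uk pk - Lγ ustar pk ≤
      (G uk - G ustar) + (J uk - J ustar) + ⟪qk, Θ uk - Θ ustar⟫ := by
    have hky := key1 (pk + γ • Θ uk) (pk + γ • Θ ustar)
    have hsimp : (pk + γ • Θ ustar) - (pk + γ • Θ uk) = γ • (Θ ustar - Θ uk) := by module
    rw [hsimp, real_inner_smul_right] at hky
    have h2γ : (0:ℝ) < 2*γ := by linarith
    have h1 : ‖proj (pk + γ • Θ uk)‖^2 - ‖proj (pk + γ • Θ ustar)‖^2 ≤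
        2*γ*⟪proj (pk + γ • Θ uk), Θ uk - Θ ustar⟫ := by
      simp only [inner_sub_right] at hky ⊢
      nlinarith [hky]
    have h2 : (‖proj (pk + γ • Θ uk)‖^2 - ‖proj (pk + γ • Θ ustar)‖^2)/(2*γ) ≤
        ⟪proj (pk + γ • Θ uk), Θ uk - Θ ustar⟫ := by
      rw [div_le_iff₀ h2γ]; nlinarith [h1]
    have h3 : (‖proj (pk + γ • Θ uk)‖^2 - ‖pk‖^2)/(2*γ)
        - (‖proj (pk + γ • Θ ustar)‖^2 - ‖pk‖^2)/(2*γ)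
        = (‖proj (pk + γ • Θ uk)‖^2 - ‖proj (pk + γ • Θ ustar)‖^2)/(2*γ) := by ring
    rw [hLγ, hLγ, hqk]
    linarith [h2, h3]
  -- block update point
  obtain ⟨uhat, huhatdef⟩ : ∃ uhat : Fin N → BlockSpace nd,
      uhat = fun i => WithLp.toLp 2 (Function.update uk i (ustar i)) := ⟨_, rfl⟩
  have hukUi : ∀ j, uk j ∈ Ui j := by rw [hU_def] at huk; exact huk
  have hustarUi : ∀ j, ustar j ∈ Ui j := by rw [hU_def] at hustar; exact hustar
  have hu1Ui : ∀ i j, u1 i j ∈ Ui j := by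
    intro i; have := hu1_mem i; rw [hU_def] at this; exact this
  have huhatU : ∀ i, uhat i ∈ U := by
    intro i; rw [hU_def]; intro j
    by_cases hji : j = i
    · subst hji; simpa [huhatdef, Function.update_self] using hustarUi j
    · simpa [huhatdef, Function.update_of_ne hji] using hukUi j
  have huhati : ∀ i, uhat i i = ustar i := by
    intro i; rw [huhatdef]; exact Function.update_self i (ustar i) uk
  have huhatj : ∀ i j, j ≠ i → uhat i j = uk j := by
    intro i j hj; rw [huhatdef]; exact Function.update_of_ne hj (ustar i) uk
  -- the convex surrogate function g
  obtain ⟨g, hgdef⟩ : ∃ g : BlockSpace nd → ℝ,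
      g = fun w => ⟪G' uk, w⟫ + J w + ⟪qk, Θ w⟫ := ⟨_, rfl⟩
  have hinner : ∀ (a w : BlockSpace nd), ⟪a, w⟫ = ∑ j, ⟪a j, w j⟫ :=
    fun a w => PiLp.inner_apply a w
  have hΘw : ∀ w, ⟪qk, Θ w⟫ = ∑ j, ⟪qk, Θi j (w j)⟫ := by
    intro w; rw [hΘ_add, inner_sum]
  have hgsum : ∀ w, g w = ∑ j, (⟪G' uk j, w j⟫ + Ji j (w j) + ⟪qk, Θi j (w j)⟫) := by
    intro w
    simp only [hgdef]
    rw [hJ_add, hΘw, hinner, Finset.sum_add_distrib, Finset.sum_add_distrib]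
  have gdiff : ∀ (i : Fin N) (w w' : BlockSpace nd), (∀ j, j ≠ i → w j = w' j) →
      g w - g w' = (⟪G' uk i, w i⟫ + Ji i (w i) + ⟪qk, Θi i (w i)⟫)
        - (⟪G' uk i, w' i⟫ + Ji i (w' i) + ⟪qk, Θi i (w' i)⟫) := by
    intro i w w' hww
    rw [hgsum, hgsum, ← Finset.sum_sub_distrib]
    rw [Finset.sum_eq_single i]
    · intro j _ hj; rw [hww j hj]; ring
    · intro h; exact absurd (Finset.mem_univ i) h
  -- F2 : telescoping over blocks
  have hF2 : g uk - g ustar = ∑ i, (g uk - g (uhat i)) := by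
    have h1 : ∀ i, g uk - g (uhat i) =
        (⟪G' uk i, uk i⟫ + Ji i (uk i) + ⟪qk, Θi i (uk i)⟫)
        - (⟪G' uk i, ustar i⟫ + Ji i (ustar i) + ⟪qk, Θi i (ustar i)⟫) := by
      intro i
      have := gdiff i uk (uhat i) (fun j hj => (huhatj i j hj).symm)
      rwa [huhati i] at this
    rw [Finset.sum_congr rfl (fun i _ => h1 i), Finset.sum_sub_distrib,
      ← hgsum, ← hgsum]
  -- min property in terms of g
  have hgmin : ∀ i, ∀ u ∈ U, (∀ j, j ≠ i → u j = uk j) →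
      g (u1 i) + D (u1 i) uk / εk ≤ g u + D u uk / εk := by
    intro i u hu hfix
    have h := hu1_min i u hu
    have e1 := gdiff i (u1 i) u (fun j hj => by rw [hu1_fix i j hj, hfix j hj])
    linarith [h, e1]
  -- convexity of g
  have hqkC : ∀ z ∈ C, 0 ≤ ⟪qk, z⟫ := by
    rw [hqk]; exact hprojCs _
  have hgconv : ∀ (a b : BlockSpace nd) (t : ℝ), t ∈ Set.Icc (0:ℝ) 1 →
      g (t • a + (1 - t) • b) ≤ t * g a + (1 - t) * g b := by
    intro a b t ht
    have h01 : (0:ℝ) ≤ 1 - t := by linarith [ht.2]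
    have h11 : t + (1 - t) = 1 := by ring
    have hJc := hJ_convex.2 (Set.mem_univ a) (Set.mem_univ b) ht.1 h01 h11
    have hq := hqkC _ (hΘ_Cconvex a b t ht)
    simp only [hgdef]
    simp only [inner_neg_right, inner_sub_right, inner_add_right, real_inner_smul_right,
      smul_eq_mul, neg_sub] at hq hJc ⊢
    linarith
  -- three point inequality
  have hthree : ∀ i, εk * (g (u1 i) - g (uhat i)) ≤ ⟪K' (u1 i) - K' uk, uhat i - u1 i⟫ := by
    intro i
    have hseg : ∀ t ∈ Set.Ioc (0:ℝ) 1,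
        t * (εk * (g (u1 i) - g (uhat i)) + ⟪K' uk, uhat i - u1 i⟫) ≤
          K (u1 i + t • (uhat i - u1 i)) - K (u1 i) := by
      intro t ht
      have ht0 : (0:ℝ) ≤ t := ht.1.le
      have ht1 : t ≤ 1 := ht.2
      have hcomb : u1 i + t • (uhat i - u1 i) = t • (uhat i) + (1 - t) • (u1 i) := by module
      have htmem : u1 i + t • (uhat i - u1 i) ∈ U := by
        rw [hU_def]; intro j
        by_cases hji : j = i
        · subst hji
          have happ : (u1 j + t • (uhat j - u1 j)) j = t • (uhat j j) + (1-t) • (u1 j j) := by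
            rw [hcomb]; simp [PiLp.add_apply, PiLp.smul_apply]
          rw [happ, huhati j]
          exact hUi_convex j (hustarUi j) (hu1Ui j j) ht0 (by linarith) (by ring)
        · have happ : (u1 i + t • (uhat i - u1 i)) j = u1 i j + t • (uhat i j - u1 i j) := by
            simp [PiLp.add_apply, PiLp.smul_apply, PiLp.sub_apply]
          rw [happ, huhatj i j hji, hu1_fix i j hji]
          simp [hukUi j]
      have hfix : ∀ j, j ≠ i → (u1 i + t • (uhat i - u1 i)) j = uk j := by
        intro j hj
        have happ : (u1 i + t • (uhat i - u1 i)) j = u1 i j + t • (uhat i j - u1 i j) := by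
          simp [PiLp.add_apply, PiLp.smul_apply, PiLp.sub_apply]
        rw [happ, huhatj i j hj, hu1_fix i j hj]
        simp
      have hgc := hgconv (uhat i) (u1 i) t ⟨ht0, ht1⟩
      rw [← hcomb] at hgc
      have hmin := hgmin i (u1 i + t • (uhat i - u1 i)) htmem hfix
      rw [hD, hD] at hmin
      have hinner2 : ⟪K' uk, (u1 i + t • (uhat i - u1 i)) - uk⟫
          = ⟪K' uk, u1 i - uk⟫ + t * ⟪K' uk, uhat i - u1 i⟫ := by
        have : (u1 i + t • (uhat i - u1 i)) - uk = (u1 i - uk) + t • (uhat i - u1 i) := by module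
        rw [this, inner_add_right, real_inner_smul_right]
      rw [hinner2] at hmin
      have hmul := mul_le_mul_of_nonneg_left hmin hεk.le
      have he1 : εk * (g (u1 i) + (K (u1 i) - K uk - ⟪K' uk, u1 i - uk⟫) / εk)
          = εk * g (u1 i) + (K (u1 i) - K uk - ⟪K' uk, u1 i - uk⟫) := by
        field_simp
        try ring
      have he2 : εk * (g (u1 i + t • (uhat i - u1 i)) +
          (K (u1 i + t • (uhat i - u1 i)) - K uk - (⟪K' uk, u1 i - uk⟫ + t * ⟪K' uk, uhat i - u1 i⟫)) / εk)
          = εk * g (u1 i + t • (uhat i - u1 i)) +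
          (K (u1 i + t • (uhat i - u1 i)) - K uk - (⟪K' uk, u1 i - uk⟫ + t * ⟪K' uk, uhat i - u1 i⟫)) := by
        field_simp
        try ring
      rw [he1, he2] at hmul
      nlinarith [hgc, hmul, hεk.le]
    have hlim := slope_limit_lower (u1 i) (uhat i - u1 i) (hK_grad (u1 i)) _ hseg
    have hsl : ⟪K' (u1 i) - K' uk, uhat i - u1 i⟫
        = ⟪K' (u1 i), uhat i - u1 i⟫ - ⟪K' uk, uhat i - u1 i⟫ := inner_sub_left _ _ _
    linarith
  have hDid : ∀ i, ⟪K' (u1 i) - K' uk, uhat i - u1 i⟫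
      = D (uhat i) uk - D (u1 i) uk - D (uhat i) (u1 i) := by
    intro i
    simp only [hD, inner_sub_left, inner_sub_right]
    ring
  -- block structure of the gradient of K
  have hKsingle : ∀ (x : BlockSpace nd) (j : Fin N) (a : EuclideanSpace ℝ (Fin (nd j)))
      (s : BlockSpace nd), s = WithLp.toLp 2 (Pi.single j a) →
      HasDerivAt (fun t : ℝ => K (x + t • s)) ⟪K' x j, a⟫ 0 := by
    intro x j a s hs
    have h := dirDeriv (f := K) (f' := K' x) x s 0 (by simpa using hK_grad x)
    have he : ⟪K' x, s⟫ = ⟪K' x j, a⟫ := by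
      rw [hinner, Finset.sum_eq_single j]
      · rw [hs]; exact congrArg _ (Pi.single_eq_same (M := fun l => EuclideanSpace ℝ (Fin (nd l))) j a)
      · intro l _ hl
        have : s l = 0 := by
          rw [hs]; exact Pi.single_eq_of_ne (M := fun l => EuclideanSpace ℝ (Fin (nd l))) hl a
        rw [this, inner_zero_right]
      · intro h; exact absurd (Finset.mem_univ j) h
    rwa [he] at h
  have hKgradblock : ∀ (x y : BlockSpace nd) (j : Fin N), x j = y j →
      ∀ a : EuclideanSpace ℝ (Fin (nd j)), ⟪K' x j, a⟫ = ⟪K' y j, a⟫ := by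
    intro x y j hxy a
    obtain ⟨s, hs⟩ : ∃ s : BlockSpace nd, s = WithLp.toLp 2 (Pi.single j a) := ⟨WithLp.toLp 2 (Pi.single j a), rfl⟩
    have hsj : s j = a := by rw [hs]; exact Pi.single_eq_same (M := fun l => EuclideanSpace ℝ (Fin (nd l))) j a
    have hsl : ∀ l, l ≠ j → s l = 0 := by
      intro l hl
      rw [hs]; exact Pi.single_eq_of_ne (M := fun l => EuclideanSpace ℝ (Fin (nd l))) hl a
    have hx := hKsingle x j a s hs
    have hy := (hKsingle y j a s hs).add_const (K x - K y)
    have hfun : (fun t : ℝ => K (x + t • s))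
        = fun t : ℝ => K (y + t • s) + (K x - K y) := by
      funext t
      have hterm : ∀ l : Fin N,
          Ki l ((x + t • s) l) - Ki l ((y + t • s) l) - (Ki l (x l) - Ki l (y l)) = 0 := by
        intro l
        have happx : (x + t • s) l = x l + t • s l := by
          simp [PiLp.add_apply, PiLp.smul_apply]
        have happy : (y + t • s) l = y l + t • s l := by
          simp [PiLp.add_apply, PiLp.smul_apply]
        rw [happx, happy]
        by_cases hl : l = j
        · subst hl; rw [hxy]; ring
        · rw [hsl l hl]
          simp
      have hz := Finset.sum_eq_zero (fun l (_ : l ∈ Finset.univ) => hterm l)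
      simp only [Finset.sum_sub_distrib] at hz
      rw [hK_add, hK_add, hK_add, hK_add]
      linarith [hz]
    rw [hfun] at hx
    exact hx.unique hy
  -- identity relating Bregman distances at ustar and at uhat i
  have hC2 : ∀ i, D (uhat i) uk - D (uhat i) (u1 i) = D ustar uk - D ustar (u1 i) := by
    intro i
    have hoff : ⟪K' (u1 i), ustar - uhat i⟫ = ⟪K' uk, ustar - uhat i⟫ := by
      rw [hinner, hinner]
      refine Finset.sum_congr rfl (fun j _ => ?_)
      have happ : (ustar - uhat i) j = ustar j - uhat i j := by
        simp [PiLp.sub_apply]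
      by_cases hj : j = i
      · subst hj
        rw [happ, huhati j]
        simp
      · rw [happ, huhatj i j hj]
        exact hKgradblock (u1 i) uk j (hu1_fix i j hj) _
    have e1 : ⟪K' (u1 i), ustar - uhat i⟫ = ⟪K' (u1 i), ustar - u1 i⟫ - ⟪K' (u1 i), uhat i - u1 i⟫ := by
      rw [← inner_sub_right]; congr 1; abel
    have e2 : ⟪K' uk, ustar - uhat i⟫ = ⟪K' uk, ustar - uk⟫ - ⟪K' uk, uhat i - uk⟫ := by
      rw [← inner_sub_right]; congr 1; abel
    simp only [hD]
    rw [e1, e2] at hoff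
    linarith [hoff]
  -- strong convexity lower bound
  have hF5 : ∀ i, β/2 * ‖uk - u1 i‖^2 ≤ D (u1 i) uk := by
    intro i
    have h := hK_strong uk (u1 i)
    rw [hD, norm_sub_rev]
    linarith
  -- step size control
  have hεβ2 : ∀ h : ℝ, εk * (BG/2 * h^2) ≤ β/2 * h^2 := by
    intro h
    rcases le_or_gt BG 0 with hB0 | hB0
    · nlinarith [mul_nonneg hεk.le (sq_nonneg h),
        mul_nonneg (by linarith [hβ] : (0:ℝ) ≤ β/2) (sq_nonneg h), hB0]
    · have hden : (0:ℝ) < N * BG + γ * τ^2 := by positivity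
      have hlt : εk * (N * BG + γ * τ^2) < N * β := (lt_div_iff₀ hden).1 hεkbar
      have hp1' : (0:ℝ) ≤ εk * (γ * τ^2) := by positivity
      have h2 : εk * ((N:ℝ) * BG) < N * β := by nlinarith [hlt, hp1']
      have h3 : (N:ℝ) * (εk * BG) < N * β := by linarith [h2]
      have hεkBG : εk * BG < β := (mul_lt_mul_iff_right₀ hNpos').1 h3
      nlinarith [sq_nonneg h, hεkBG, mul_nonneg hεk.le (sq_nonneg h)]
  -- smoothness and Lipschitz bounds
  have hF4 : ∀ i, g uk - g (u1 i) ≤ (L uk pstar - L (u1 i) pstar)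
      + BG/2 * ‖uk - u1 i‖^2 + τ * ‖qk - pstar‖ * ‖uk - u1 i‖ := by
    intro i
    have hdes := descent_lemma hG_grad BG hBG uk (u1 i)
    rw [norm_sub_rev (u1 i) uk] at hdes
    have hcs : ⟪qk - pstar, Θ uk - Θ (u1 i)⟫ ≤ τ * ‖qk - pstar‖ * ‖uk - u1 i‖ := by
      have h1 : ⟪qk - pstar, Θ uk - Θ (u1 i)⟫ ≤ ‖qk - pstar‖ * ‖Θ uk - Θ (u1 i)‖ :=
        real_inner_le_norm _ _
      have h2 := hΘ_lip uk (hUO huk) (u1 i) (hUO (hu1_mem i))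
      nlinarith [norm_nonneg (qk - pstar)]
    simp only [hgdef, hL] at *
    simp only [inner_sub_left, inner_sub_right] at hcs hdes ⊢
    linarith
  -- the per-block key inequality
  have key : ∀ i, εk * (g uk - g (uhat i)) ≤ (D ustar uk - D ustar (u1 i))
      + εk * (L uk pstar - L (u1 i) pstar) + εk * τ * ‖qk - pstar‖ * ‖uk - u1 i‖ := by
    intro i
    have h3 := hthree i
    have hid := hDid i
    have hc2 := hC2 i
    have h5 := hF5 i
    have hεβ := hεβ2 ‖uk - u1 i‖
    have h4 := mul_le_mul_of_nonneg_left (hF4 i) hεk.le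
    nlinarith [h3, hid, hc2, h5, hεβ, h4]
  -- sum the key inequality
  have hsumkey : εk * (g uk - g ustar) ≤
      (N * D ustar uk - ∑ i, D ustar (u1 i))
      + εk * (N * L uk pstar - ∑ i, L (u1 i) pstar)
      + εk * τ * ‖qk - pstar‖ * ∑ i, ‖uk - u1 i‖ := by
    have h1 : εk * (g uk - g ustar) = ∑ i, εk * (g uk - g (uhat i)) := by
      rw [← Finset.mul_sum, ← hF2]
    rw [h1]
    refine le_trans (Finset.sum_le_sum (fun i _ => key i)) (le_of_eq ?_)
    rw [Finset.sum_add_distrib, Finset.sum_add_distrib, ← Finset.mul_sum,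
      ← Finset.mul_sum, Finset.sum_sub_distrib, Finset.sum_sub_distrib,
      Finset.sum_const, Finset.sum_const, Finset.card_univ, Fintype.card_fin,
      nsmul_eq_mul, nsmul_eq_mul]
    try ring
  -- gradient inequality for G at uk
  have hF1 : (G uk - G ustar) + (J uk - J ustar) + ⟪qk, Θ uk - Θ ustar⟫ ≤ g uk - g ustar := by
    have hgi := grad_convex_ineq uk ustar (hG_grad uk) hG_convex
    simp only [hgdef]
    simp only [inner_sub_right] at hgi ⊢
    linarith
  have hA : εk * (Lγ uk pk - Lγ ustar pk) ≤ εk * (g uk - g ustar) :=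
    mul_le_mul_of_nonneg_left (le_trans stepA hF1) hεk.le
  -- saddle point inequality
  have hS2 : (N:ℝ) * L ustar pstar ≤ ∑ i, L (u1 i) pstar := by
    have h1 : (N:ℝ) * L ustar pstar = ∑ _i : Fin N, L ustar pstar := by
      rw [Finset.sum_const, Finset.card_univ, Fintype.card_fin, nsmul_eq_mul]
    rw [h1]
    exact Finset.sum_le_sum (fun i _ => hsaddle.2 _ (hu1_mem i))
  have hmono : εk1 * ((∑ i, L (u1 i) pstar) - N * L ustar pstar)
      ≤ εk * ((∑ i, L (u1 i) pstar) - N * L ustar pstar) :=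
    mul_le_mul_of_nonneg_right hεk1k (by linarith [hS2])
  have cleaned : εk * (Lγ uk pk - Lγ ustar pk) ≤
      (N * D ustar uk - ∑ i, D ustar (u1 i))
      + εk * N * (L uk pstar - L ustar pstar)
      - εk1 * ((∑ i, L (u1 i) pstar) - N * L ustar pstar)
      + εk * τ * ‖qk - pstar‖ * ∑ i, ‖uk - u1 i‖ := by
    nlinarith [hA, hsumkey, hmono]
  -- expand the Lyapunov sum
  have hS1 : ∑ i, Λ εk1 (u1 i) (p1 i) = (∑ i, D ustar (u1 i))
      + εk1 / (2*γ*N) * ∑ i, ‖pstar - p1 i‖^2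
      + εk1 * ((∑ i, L (u1 i) pstar) - N * L ustar pstar) := by
    rw [Finset.sum_congr rfl (fun i _ => hΛ εk1 (u1 i) (p1 i))]
    rw [Finset.sum_add_distrib, Finset.sum_add_distrib, ← Finset.mul_sum, ← Finset.mul_sum,
      Finset.sum_sub_distrib, Finset.sum_const, Finset.card_univ, Fintype.card_fin,
      nsmul_eq_mul]
    try ring
  rw [hΛ εk uk pk, hS1]
  have hgoal_eq : D ustar uk + εk / (2 * γ * ↑N) * ‖pstar - pk‖ ^ 2
        + εk * (L uk pstar - L ustar pstar)
      - 1 / ↑N * ((∑ i, D ustar (u1 i))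
          + εk1 / (2*γ*↑N) * ∑ i, ‖pstar - p1 i‖^2
          + εk1 * ((∑ i, L (u1 i) pstar) - ↑N * L ustar pstar))
      - 1 / (2 * γ * ↑N) * (εk * ‖pstar - pk‖ ^ 2 - εk1 * (1 / ↑N * ∑ i, ‖pstar - p1 i‖ ^ 2))
      + εk * τ * ‖qk - pstar‖ * (1 / ↑N * ∑ i, ‖uk - u1 i‖)
      = ((N * D ustar uk - ∑ i, D ustar (u1 i))
        + εk * N * (L uk pstar - L ustar pstar)
        - εk1 * ((∑ i, L (u1 i) pstar) - N * L ustar pstar)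
        + εk * τ * ‖qk - pstar‖ * ∑ i, ‖uk - u1 i‖) / N := by
    field_simp
    ring
  calc εk / ↑N * (Lγ uk pk - Lγ ustar pk)
      = (εk * (Lγ uk pk - Lγ ustar pk)) / ↑N := by ring
    _ ≤ ((N * D ustar uk - ∑ i, D ustar (u1 i))
        + εk * N * (L uk pstar - L ustar pstar)
        - εk1 * ((∑ i, L (u1 i) pstar) - N * L ustar pstar)
        + εk * τ * ‖qk - pstar‖ * ∑ i, ‖uk - u1 i‖) / ↑N := by
        gcongr
    _ = _ := hgoal_eq.symm
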